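/- arXiv:2012.01850 — 2 statements merged into one kernel-verified Lean document; each statement's English description precedes it below -/
import Mathlib

section
/- A cooperative game v : 2^N → ℝ with v(∅) = 0 is supermodular (v(S∩T) + v(S∪T) ≥ v(S) + v(T) for all S,T ⊆ N) if and only if for every ordering π = i₁…i_n of N, the marginal (Monge) vector x^π defined by x^π_{i_k} = v({i₁,…,i_k}) − v({i₁,…,i_{k−1}}) lies in the core of v. -/
open Finset


open Finset

namespace MongeAux

variable {N : Type*} [Fintype N] [DecidableEq N]

/-- the set of the first `m` players under ordering `π` -/
def F (π : Fin (Fintype.card N) ≃ N) (m : ℕ) : Finset N :=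
  (univ.filter (fun k : Fin (Fintype.card N) => (k : ℕ) < m)).image π

lemma mem_F {π : Fin (Fintype.card N) ≃ N} {m : ℕ} {i : N} :
    i ∈ F π m ↔ ((π.symm i : ℕ) < m) := by
  simp only [F, mem_image, mem_filter, mem_univ, true_and]
  constructor
  · rintro ⟨k, hk, rfl⟩; simpa using hk
  · intro h; exact ⟨π.symm i, h, by simp⟩

lemma F_zero (π : Fin (Fintype.card N) ≃ N) : F π 0 = ∅ := by
  ext i; simp [mem_F]

lemma F_card (π : Fin (Fintype.card N) ≃ N) : F π (Fintype.card N) = univ := by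
  ext i; simp [mem_F, (π.symm i).isLt]

lemma image_Iio (π : Fin (Fintype.card N) ≃ N) (k : Fin (Fintype.card N)) :
    (Iio k).image π = F π (k : ℕ) := by
  ext i
  simp only [mem_image, mem_Iio, mem_F]
  constructor
  · rintro ⟨j, hj, rfl⟩; simpa using hj
  · intro h; exact ⟨π.symm i, h, by simp⟩

lemma image_Iic (π : Fin (Fintype.card N) ≃ N) (k : Fin (Fintype.card N)) :
    (Iic k).image π = F π ((k : ℕ) + 1) := by
  ext i
  simp only [mem_image, mem_Iic, mem_F]
  constructor
  · rintro ⟨j, hj, rfl⟩; simpa [Nat.lt_succ_iff] using hj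
  · intro h; exact ⟨π.symm i, by simpa [Nat.lt_succ_iff] using h, by simp⟩

lemma F_succ (π : Fin (Fintype.card N) ≃ N) (k : Fin (Fintype.card N)) :
    F π ((k : ℕ) + 1) = insert (π k) (F π (k : ℕ)) := by
  ext i
  simp only [mem_F, mem_insert, Nat.lt_succ_iff]
  constructor
  · intro h
    rcases eq_or_lt_of_le h with h | h
    · left; have : π.symm i = k := Fin.ext h; rw [← this]; simp
    · right; exact h
  · rintro (rfl | h)
    · simp
    · exact h.le

lemma sum_fin_block {n : ℕ} (g : ℕ → ℝ) (a b : ℕ) (hab : a ≤ b) (hb : b ≤ n) :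
    ∑ k ∈ univ.filter (fun k : Fin n => a ≤ (k : ℕ) ∧ (k : ℕ) < b),
      (g ((k : ℕ) + 1) - g (k : ℕ)) = g b - g a := by
  rw [Finset.sum_filter]
  rw [Fin.sum_univ_eq_sum_range (fun m => if a ≤ m ∧ m < b then g (m + 1) - g m else 0)]
  rw [← Finset.sum_filter]
  have h1 : (Finset.range n).filter (fun m => a ≤ m ∧ m < b) = Finset.Ico a b := by
    ext m
    simp only [Finset.mem_filter, Finset.mem_range, Finset.mem_Ico]
    omega
  rw [h1, Finset.sum_Ico_eq_sub _ hab, Finset.sum_range_sub, Finset.sum_range_sub]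
  ring

lemma sum_block (v : Finset N → ℝ) (π : Fin (Fintype.card N) ≃ N) (a b : ℕ)
    (hab : a ≤ b) (hb : b ≤ Fintype.card N) (B : Finset N)
    (hB : ∀ i, i ∈ B ↔ a ≤ ((π.symm i : Fin (Fintype.card N)) : ℕ) ∧ ((π.symm i : Fin (Fintype.card N)) : ℕ) < b) :
    ∑ i ∈ B, (v (F π (((π.symm i : Fin (Fintype.card N)) : ℕ) + 1)) - v (F π ((π.symm i : Fin (Fintype.card N)) : ℕ)))
      = v (F π b) - v (F π a) := by
  have hB' : B = (univ.filter (fun k : Fin (Fintype.card N) => a ≤ (k : ℕ) ∧ (k : ℕ) < b)).image π := by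
    ext i
    simp only [mem_image, mem_filter, mem_univ, true_and, hB]
    constructor
    · intro h; exact ⟨π.symm i, h, by simp⟩
    · rintro ⟨k, hk, rfl⟩; simpa using hk
  rw [hB', Finset.sum_image (fun x _ y _ h => π.injective h)]
  simp only [Equiv.symm_apply_apply]
  exact sum_fin_block (fun m => v (F π m)) a b hab hb


theorem fwd (v : Finset N → ℝ) (hv0 : v ∅ = 0)
    (hsm : ∀ S T : Finset N, v S + v T ≤ v (S ∩ T) + v (S ∪ T))
    (π : Fin (Fintype.card N) ≃ N) :
        (∑ i : N, (v ((Iic (π.symm i)).image π) - v ((Iio (π.symm i)).image π)) = v univ) ∧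
        ∀ S : Finset N,
          v S ≤ ∑ i ∈ S, (v ((Iic (π.symm i)).image π) - v ((Iio (π.symm i)).image π)) := by
  simp only [image_Iic, image_Iio]
  constructor
  · have := sum_block v π 0 (Fintype.card N) (Nat.zero_le _) le_rfl univ
      (fun i => by simp [(π.symm i).isLt])
    rw [F_zero, F_card, hv0] at this
    simpa using this
  · intro S
    have hstep : ∀ i ∈ S,
        v (S ∩ F π (((π.symm i : Fin (Fintype.card N)) : ℕ) + 1)) - v (S ∩ F π ((π.symm i : Fin (Fintype.card N)) : ℕ))
          ≤ v (F π (((π.symm i : Fin (Fintype.card N)) : ℕ) + 1)) - v (F π ((π.symm i : Fin (Fintype.card N)) : ℕ)) := by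
      intro i hi
      set k := π.symm i with hk
      set P := F π (k : ℕ) with hP
      have hQ : F π ((k : ℕ) + 1) = insert i P := by
        rw [F_succ]; congr 1; simp [hk]
      have h1 : (S ∩ insert i P) ∩ P = S ∩ P := by
        rw [inter_assoc, inter_eq_right.mpr (subset_insert i P)]
      have h2 : (S ∩ insert i P) ∪ P = insert i P := by
        apply Subset.antisymm
        · exact union_subset inter_subset_right (subset_insert i P)
        · intro j hj
          rcases mem_insert.mp hj with rfl | hj
          · exact mem_union_left _ (mem_inter.mpr ⟨hi, mem_insert_self _ _⟩)
          · exact mem_union_right _ hj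
      have := hsm (S ∩ insert i P) P
      rw [h1, h2, hQ] at *
      linarith
    have htel : ∑ i ∈ S,
        (v (S ∩ F π (((π.symm i : Fin (Fintype.card N)) : ℕ) + 1)) - v (S ∩ F π ((π.symm i : Fin (Fintype.card N)) : ℕ))) = v S := by
      have hzero : ∀ i ∈ univ, i ∉ S →
          v (S ∩ F π (((π.symm i : Fin (Fintype.card N)) : ℕ) + 1)) - v (S ∩ F π ((π.symm i : Fin (Fintype.card N)) : ℕ)) = 0 := by
        intro i _ hiS
        have : S ∩ F π (((π.symm i : Fin (Fintype.card N)) : ℕ) + 1) = S ∩ F π ((π.symm i : Fin (Fintype.card N)) : ℕ) := by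
          rw [F_succ]
          rw [Finset.inter_insert_of_notMem (by simpa using hiS)]
        rw [this]; ring
      rw [Finset.sum_subset (Finset.subset_univ S) hzero]
      have := sum_block (fun A => v (S ∩ A)) π 0 (Fintype.card N) (Nat.zero_le _) le_rfl univ
        (fun i => by simp [(π.symm i).isLt])
      rw [F_zero, F_card] at this
      simp only [Finset.inter_univ, Finset.inter_empty, hv0] at this
      simpa using this
    calc v S = _ := htel.symm
      _ ≤ _ := Finset.sum_le_sum hstep
theorem rev (v : Finset N → ℝ) (hv0 : v ∅ = 0)
    (h : ∀ π : Fin (Fintype.card N) ≃ N,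
        (∑ i : N, (v ((Iic (π.symm i)).image π) - v ((Iio (π.symm i)).image π)) = v univ) ∧
        ∀ S : Finset N,
          v S ≤ ∑ i ∈ S, (v ((Iic (π.symm i)).image π) - v ((Iio (π.symm i)).image π)))
    (S T : Finset N) : v S + v T ≤ v (S ∩ T) + v (S ∪ T) := by
  classical
  set l : List N := (S ∩ T).toList ++ ((S \ T).toList ++ ((T \ S).toList ++ (univ \ (S ∪ T)).toList)) with hl
  have hnd : l.Nodup := by
    simp only [hl, List.nodup_append]
    refine ⟨Finset.nodup_toList _, ⟨Finset.nodup_toList _, ⟨Finset.nodup_toList _, Finset.nodup_toList _, ?_⟩, ?_⟩, ?_⟩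
    · intro x hx y hy rfl
      simp only [Finset.mem_toList, Finset.mem_sdiff, Finset.mem_union, Finset.mem_univ, true_and] at hx hy
      tauto
    · intro x hx y hy rfl
      simp only [Finset.mem_toList, List.mem_append, Finset.mem_sdiff, Finset.mem_univ, true_and,
        Finset.mem_union] at hx hy
      tauto
    · intro x hx y hy rfl
      simp only [Finset.mem_toList, List.mem_append, Finset.mem_sdiff, Finset.mem_inter,
        Finset.mem_univ, true_and, Finset.mem_union] at hx hy
      tauto
  have hmem : ∀ x : N, x ∈ l := by
    intro x
    simp only [hl, List.mem_append, Finset.mem_toList, Finset.mem_sdiff, Finset.mem_inter,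
      Finset.mem_union, Finset.mem_univ, true_and]
    tauto
  have hlen : l.length = Fintype.card N := by
    have h1 : l.toFinset = univ := by
      ext x; simp [hmem x]
    have := List.toFinset_card_of_nodup hnd
    rw [h1] at this
    simp only [Finset.card_univ] at this
    omega
  set π : Fin (Fintype.card N) ≃ N :=
    (finCongr hlen).symm.trans (hnd.getEquivOfForallMemList l hmem) with hπ
  -- F π m = (l.take m).toFinset
  have hF : ∀ m : ℕ, F π m = (l.take m).toFinset := by
    intro m
    ext i
    simp only [mem_F, List.mem_toFinset]
    constructor
    · intro hm
      have : π (π.symm i) = i := π.apply_symm_apply i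
      rw [hπ] at this
      simp only [Equiv.trans_apply, finCongr_symm, finCongr_apply,
        List.Nodup.getEquivOfForallMemList_apply] at this
      rw [List.mem_take_iff_getElem]
      exact ⟨((π.symm i : Fin (Fintype.card N)) : ℕ), by omega, this⟩
    · intro hm
      rw [List.mem_take_iff_getElem] at hm
      obtain ⟨j, hj, hji⟩ := hm
      have hjl : j < l.length := lt_of_lt_of_le hj (min_le_right _ _)
      have : π ⟨j, by omega⟩ = i := by
        rw [hπ]
        simp only [Equiv.trans_apply, finCongr_symm, finCongr_apply,
          List.Nodup.getEquivOfForallMemList_apply]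
        exact hji
      have : π.symm i = ⟨j, by omega⟩ := by rw [← this]; simp
      rw [this]
      exact lt_of_lt_of_le hj (min_le_left _ _)
  -- prefix identities
  have hca : (S ∩ T).card ≤ S.card := Finset.card_le_card Finset.inter_subset_left
  have hcb : S.card ≤ (S ∪ T).card := Finset.card_le_card Finset.subset_union_left
  have hcn : (S ∪ T).card ≤ Fintype.card N := Finset.card_le_univ _
  have hFa : F π ((S ∩ T).card) = S ∩ T := by
    rw [hF]
    have : l.take ((S ∩ T).card) = (S ∩ T).toList := by
      rw [hl]
      rw [show (S ∩ T).card = (S ∩ T).toList.length from (Finset.length_toList _).symm]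
      exact List.take_left
    rw [this, Finset.toList_toFinset]
  have hFb : F π (S.card) = S := by
    rw [hF]
    have hsplit : l.take (S.card) = (S ∩ T).toList ++ (S \ T).toList := by
      have h2 : ((S ∩ T).toList ++ (S \ T).toList).length = S.card := by
        simp only [List.length_append, Finset.length_toList]
        rw [Finset.card_inter_add_card_sdiff]
      calc l.take (S.card)
          = (((S ∩ T).toList ++ (S \ T).toList) ++ ((T \ S).toList ++ (univ \ (S ∪ T)).toList)).take (S.card) := by
            rw [hl, List.append_assoc]
        _ = (S ∩ T).toList ++ (S \ T).toList := by
            rw [← h2]; exact List.take_left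
    rw [hsplit, List.toFinset_append, Finset.toList_toFinset, Finset.toList_toFinset]
    ext x; simp only [Finset.mem_union, Finset.mem_inter, Finset.mem_sdiff]; tauto
  have hFc : F π ((S ∪ T).card) = S ∪ T := by
    rw [hF]
    have hsplit : l.take ((S ∪ T).card) = ((S ∩ T).toList ++ (S \ T).toList) ++ (T \ S).toList := by
      have h2 : (((S ∩ T).toList ++ (S \ T).toList) ++ (T \ S).toList).length = (S ∪ T).card := by
        simp only [List.length_append, Finset.length_toList]
        rw [Finset.card_inter_add_card_sdiff]
        have e : S ∪ T = S ∪ (T \ S) := by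
          ext x; simp only [Finset.mem_union, Finset.mem_sdiff]; tauto
        rw [e, Finset.card_union_of_disjoint Finset.disjoint_sdiff]
      calc l.take ((S ∪ T).card)
          = ((((S ∩ T).toList ++ (S \ T).toList) ++ (T \ S).toList) ++ (univ \ (S ∪ T)).toList).take ((S ∪ T).card) := by
            rw [hl]; simp [List.append_assoc]
        _ = ((S ∩ T).toList ++ (S \ T).toList) ++ (T \ S).toList := by
            rw [← h2]; exact List.take_left
    rw [hsplit, List.toFinset_append, List.toFinset_append, Finset.toList_toFinset,
      Finset.toList_toFinset, Finset.toList_toFinset]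
    ext x
    simp only [Finset.mem_union, Finset.mem_inter, Finset.mem_sdiff]
    tauto
  -- block sums
  have hsum1 : ∑ i ∈ S ∩ T,
      (v (F π (((π.symm i : Fin (Fintype.card N)) : ℕ) + 1)) - v (F π ((π.symm i : Fin (Fintype.card N)) : ℕ)))
        = v (S ∩ T) - v ∅ := by
    have hmm : ∀ i : N, i ∈ S ∩ T ↔ ((π.symm i : Fin (Fintype.card N)) : ℕ) < (S ∩ T).card := by
      intro i; rw [← @mem_F _ _ _ π, hFa]
    have := sum_block v π 0 ((S ∩ T).card) (Nat.zero_le _) (by omega) (S ∩ T)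
      (fun i => ⟨fun h => ⟨Nat.zero_le _, (hmm i).mp h⟩, fun h => (hmm i).mpr h.2⟩)
    rw [hFa, F_zero] at this
    exact this
  have hsum2 : ∑ i ∈ T \ S,
      (v (F π (((π.symm i : Fin (Fintype.card N)) : ℕ) + 1)) - v (F π ((π.symm i : Fin (Fintype.card N)) : ℕ)))
        = v (S ∪ T) - v S := by
    have hTS : ∀ i : N, i ∈ T \ S ↔
        S.card ≤ ((π.symm i : Fin (Fintype.card N)) : ℕ) ∧ ((π.symm i : Fin (Fintype.card N)) : ℕ) < (S ∪ T).card := by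
      intro i
      have h1 : (i ∈ F π ((S ∪ T).card) ∧ i ∉ F π (S.card)) ↔ i ∈ T \ S := by
        rw [hFb, hFc]
        simp only [Finset.mem_union, Finset.mem_sdiff]
        tauto
      rw [← h1, mem_F, mem_F]
      omega
    have := sum_block v π (S.card) ((S ∪ T).card) hcb (by omega) (T \ S) hTS
    rw [hFb, hFc] at this
    exact this
  obtain ⟨-, hcore⟩ := h π
  have hT := hcore T
  simp only [image_Iic, image_Iio] at hT
  have hTeq : (S ∩ T) ∪ (T \ S) = T := by
    ext x; simp only [Finset.mem_union, Finset.mem_inter, Finset.mem_sdiff]; tauto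
  have hdisj : Disjoint (S ∩ T) (T \ S) := by
    apply Finset.disjoint_left.mpr
    intro i hi hi'
    simp only [Finset.mem_inter, Finset.mem_sdiff] at hi hi'
    tauto
  rw [← hTeq, Finset.sum_union hdisj, hsum1, hsum2, hTeq] at hT
  linarith
end MongeAux

/-- A zero-normalized cooperative game `v : 2^N → ℝ` is supermodular
(`v(S∩T) + v(S∪T) ≥ v(S) + v(T)` for all coalitions `S, T`) if and only if for every
ordering `π` of the players, the marginal (Monge) vector `x^π`, whose component at the
`k`-th player `π k` is `v({π 1,…,π k}) - v({π 1,…,π (k-1)})`, lies in the core of `v`,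
i.e. `Σ_{i ∈ N} x^π_i = v(N)` and `Σ_{i ∈ S} x^π_i ≥ v(S)` for all `S ⊆ N`. -/
theorem supermodular_iff_monge_vectors_in_core (N : Type*) [Fintype N] [DecidableEq N]
    (v : Finset N → ℝ) (hv0 : v ∅ = 0) :
    (∀ S T : Finset N, v S + v T ≤ v (S ∩ T) + v (S ∪ T)) ↔
      ∀ π : Fin (Fintype.card N) ≃ N,
        (∑ i : N, (v ((Iic (π.symm i)).image π) - v ((Iio (π.symm i)).image π)) = v univ) ∧
        ∀ S : Finset N,
          v S ≤ ∑ i ∈ S, (v ((Iic (π.symm i)).image π) - v ((Iio (π.symm i)).image π)) := by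
  constructor
  · exact fun hsm π => MongeAux.fwd v hv0 hsm π
  · exact fun h S T => MongeAux.rev v hv0 h S T
end

section
/- For a supermodular cooperative game v : 2^N → ℝ with v(∅) = 0, the core of v is nonempty. -/
open Finset

/-- For a supermodular cooperative game `v : 2^N → ℝ` with `v(∅) = 0`, the core is
nonempty: there is an allocation `x ∈ ℝ^N` with `Σ_{i ∈ N} x i = v(N)` and
`Σ_{i ∈ S} x i ≥ v(S)` for all coalitions `S ⊆ N`. -/
theorem supermodular_core_nonempty (N : Type*) [Fintype N] [DecidableEq N]
    (v : Finset N → ℝ) (hv0 : v ∅ = 0)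
    (hsuper : ∀ S T : Finset N, v S + v T ≤ v (S ∩ T) + v (S ∪ T)) :
    ∃ x : N → ℝ, (∑ i : N, x i = v univ) ∧ ∀ S : Finset N, v S ≤ ∑ i ∈ S, x i := by
  classical
  set n := Fintype.card N with hn
  let e := Fintype.equivFin N
  let P : ℕ → Finset N := fun k => univ.filter (fun j => (e j : ℕ) < k)
  let x : N → ℝ := fun i => v (P ((e i : ℕ) + 1)) - v (P (e i))
  have hPsucc : ∀ i : N, P ((e i : ℕ) + 1) = insert i (P (e i)) := by
    intro i
    ext j
    simp only [P, mem_filter, mem_univ, true_and, mem_insert]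
    constructor
    · intro h
      rcases Nat.lt_succ_iff_lt_or_eq.mp h with h | h
      · exact Or.inr h
      · exact Or.inl (e.injective (Fin.val_injective h))
    · rintro (rfl | h)
      · exact Nat.lt_succ_self _
      · exact Nat.lt_succ_of_lt h
  have hnotmem : ∀ i : N, i ∉ P (e i) := by
    intro i; simp [P]
  have hsum : ∀ k, k ≤ n → ∑ i ∈ P k, x i = v (P k) := by
    intro k
    induction k with
    | zero => intro _; simp [P, hv0]
    | succ k ih =>
      intro hk
      have hk' : k < n := hk
      set i := e.symm ⟨k, hk'⟩ with hi
      have hei : (e i : ℕ) = k := by simp [hi]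
      have h1 : P (k + 1) = insert i (P k) := by
        rw [← hei, hPsucc i]
      have hxi : x i = v (P (k + 1)) - v (P k) := by
        simp only [x, hei]
      rw [h1, sum_insert (hei ▸ hnotmem i), ih (le_of_lt hk'), ← h1, hxi]
      ring
  have hineq : ∀ S : Finset N, v S ≤ ∑ i ∈ S, x i := by
    intro S
    induction S using Finset.strongInduction with
    | _ S ih =>
      rcases S.eq_empty_or_nonempty with rfl | hS
      · simp [hv0]
      · obtain ⟨i, hiS, hmax⟩ := S.exists_max_image (fun j => (e j : ℕ)) hS
        have hScap : S ∩ P (e i) = S.erase i := by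
          ext j
          simp only [mem_inter, mem_erase, P, mem_filter, mem_univ, true_and]
          constructor
          · rintro ⟨hj, hlt⟩
            exact ⟨fun h => by subst h; exact lt_irrefl _ hlt, hj⟩
          · rintro ⟨hne, hj⟩
            refine ⟨hj, lt_of_le_of_ne (hmax j hj) ?_⟩
            intro h; exact hne (e.injective (Fin.val_injective h))
        have hScup : S ∪ P (e i) = P ((e i : ℕ) + 1) := by
          rw [hPsucc i]
          apply Subset.antisymm
          · intro j hj
            rcases mem_union.mp hj with hj | hj
            · rcases eq_or_ne j i with rfl | hne
              · exact mem_insert_self _ _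
              · refine mem_insert_of_mem ?_
                simp only [P, mem_filter, mem_univ, true_and]
                exact lt_of_le_of_ne (hmax j hj)
                  (fun h => hne (e.injective (Fin.val_injective h)))
            · exact mem_insert_of_mem hj
          · intro j hj
            rcases mem_insert.mp hj with rfl | hj
            · exact mem_union_left _ hiS
            · exact mem_union_right _ hj
        have key := hsuper S (P (e i))
        rw [hScap, hScup] at key
        have hxi : v S ≤ v (S.erase i) + x i := by
          simp only [x]; linarith
        have hih := ih (S.erase i) (erase_ssubset hiS)
        calc v S ≤ v (S.erase i) + x i := hxi
          _ ≤ (∑ j ∈ S.erase i, x j) + x i := by linarith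
          _ = ∑ j ∈ S, x j := by
              rw [add_comm, ← sum_insert (notMem_erase i S), insert_erase hiS]
  refine ⟨x, ?_, hineq⟩
  have hPn : P n = univ := by
    ext j; simp [P, hn, (e j).isLt]
  have := hsum n le_rfl
  rw [hPn] at this
  exact this
end
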